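/- arXiv:1308.1551 — 3 statements merged into one kernel-verified Lean document; each statement's English description precedes it below -/
import Mathlib

section
/- Let δ : X₂ → X₁ be an injective A-linear map of finite-dimensional A-modules, π : X₁ → coker(δ) the canonical projection, f₂ : X₂ → E₂ an injective A-linear map into an injective A-module E₂, η : coker(δ) → K an injective A-linear map into an injective A-module K, and s : X₁ → E₂ any A-linear map satisfying s∘δ = f₂. Then the map f₁ := (s, η∘π) : X₁ → E₂ ⊕ K is injective, it satisfies f₁∘δ = (f₂, 0) : X₂ → E₂ ⊕ K (i.e. the square formed by δ, the inclusion E₂ → E₂⊕K into the first summand, f₂ and f₁ commutes), and the induced map coker(f₂) → coker(f₁) on cokernels is injective. -/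
/-!
Since `η` is injective, the second component of `f₁ x` vanishes exactly when `x ∈ range δ`.
Hence `f₁` restricted to `range δ` is `s ∘ δ = f₂`, which is injective, and the preimage of
`range f₁` under `E₂ → E₂ × K` is `s (range δ) = range f₂`; the latter says precisely that the
induced map on cokernels has trivial kernel.
-/

theorem Submodule.mapQ_injective_of_comap_eq {R M N : Type*} [Ring R]
    [AddCommGroup M] [Module R M] [AddCommGroup N] [Module R N]
    {p : Submodule R M} {q : Submodule R N} {f : M →ₗ[R] N} (h : q.comap f = p) :
    Function.Injective (p.mapQ q f h.ge) := by
  rw [← LinearMap.ker_eq_bot, Submodule.ker_mapQ, h, Submodule.mkQ_map_self]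

namespace LinearMap

variable {R X₂ X₁ E K : Type*} [Ring R]
  [AddCommGroup X₂] [Module R X₂] [AddCommGroup X₁] [Module R X₁]
  [AddCommGroup E] [Module R E] [AddCommGroup K] [Module R K]
  (δ : X₂ →ₗ[R] X₁) (s : X₁ →ₗ[R] E) {η : (X₁ ⧸ range δ) →ₗ[R] K}

theorem ker_comp_mkQ_of_injective (hη : Function.Injective η) :
    ker (η ∘ₗ (range δ).mkQ) = range δ := by
  rw [ker_comp, ker_eq_bot.mpr hη, Submodule.comap_bot, Submodule.ker_mkQ]

theorem prod_comp_mkQ_comp_self :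
    (s.prod (η ∘ₗ (range δ).mkQ)) ∘ₗ δ = inl R E K ∘ₗ (s ∘ₗ δ) := by
  rw [prod_comp, comp_assoc, range_mkQ_comp, comp_zero, inl_eq_prod, prod_comp, id_comp,
    zero_comp]

theorem injective_prod_comp_mkQ (hη : Function.Injective η)
    (hsδ : Function.Injective (s ∘ₗ δ)) :
    Function.Injective (s.prod (η ∘ₗ (range δ).mkQ)) := by
  rw [← ker_eq_bot, ker_prod, ker_comp_mkQ_of_injective δ hη, eq_bot_iff]
  rintro _ ⟨hs, y, rfl⟩
  have hy : y = 0 := hsδ (by simpa using hs)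
  simp [hy]

theorem comap_inl_range_prod_comp_mkQ (hη : Function.Injective η) :
    (range (s.prod (η ∘ₗ (range δ).mkQ))).comap (inl R E K) = range (s ∘ₗ δ) := by
  ext e
  simp only [Submodule.mem_comap, inl_apply, mem_range, comp_apply]
  constructor
  · rintro ⟨x, hx⟩
    obtain ⟨rfl, hx⟩ := Prod.ext_iff.mp hx
    obtain ⟨y, rfl⟩ : x ∈ range δ := (ker_comp_mkQ_of_injective δ hη).le hx
    exact ⟨y, rfl⟩
  · rintro ⟨y, rfl⟩
    exact ⟨δ y, LinearMap.congr_fun (prod_comp_mkQ_comp_self δ s) y⟩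

end LinearMap

theorem quiver_two_to_one_construction_general
    (A : Type) [Ring A]
    (X₂ X₁ E₂ K : Type)
    [AddCommGroup X₂] [Module A X₂] [AddCommGroup X₁] [Module A X₁]
    [AddCommGroup E₂] [Module A E₂] [AddCommGroup K] [Module A K]
    (δ : X₂ →ₗ[A] X₁)
    (f₂ : X₂ →ₗ[A] E₂) (hf₂ : Function.Injective f₂)
    (η : (X₁ ⧸ LinearMap.range δ) →ₗ[A] K) (hη : Function.Injective η)
    (s : X₁ →ₗ[A] E₂) (hs : s ∘ₗ δ = f₂) :
    ∀ f₁ : X₁ →ₗ[A] E₂ × K,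
      f₁ = LinearMap.prod s (η ∘ₗ (LinearMap.range δ).mkQ) →
      Function.Injective f₁ ∧
      f₁ ∘ₗ δ = LinearMap.inl A E₂ K ∘ₗ f₂ ∧
      ∃ g : (E₂ ⧸ LinearMap.range f₂) →ₗ[A] ((E₂ × K) ⧸ LinearMap.range f₁),
        g ∘ₗ (LinearMap.range f₂).mkQ =
          (LinearMap.range f₁).mkQ ∘ₗ LinearMap.inl A E₂ K ∧
        Function.Injective g := by
  rintro f₁ rfl
  subst hs
  exact ⟨LinearMap.injective_prod_comp_mkQ δ s hη hf₂, LinearMap.prod_comp_mkQ_comp_self δ s, _,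
    Submodule.mapQ_mkQ _ _ _,
    Submodule.mapQ_injective_of_comap_eq (LinearMap.comap_inl_range_prod_comp_mkQ δ s hη)⟩

/-- Key construction for the quiver `2 → 1`: given monic `δ : X₂ → X₁`, an embedding
`f₂ : X₂ → E₂` into an injective, an embedding `η : coker δ → K` into an injective, and
`s : X₁ → E₂` with `s ∘ δ = f₂`, the map `f₁ = (s, η ∘ π) : X₁ → E₂ ⊕ K` is injective,
satisfies `f₁ ∘ δ = (f₂, 0)`, and the induced map on cokernels is injective. -/
theorem quiver_two_to_one_construction
    (k : Type) (A : Type) [Field k] [Ring A] [Algebra k A] [FiniteDimensional k A]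
    (X₂ X₁ E₂ K : Type)
    [AddCommGroup X₂] [Module A X₂] [AddCommGroup X₁] [Module A X₁]
    [AddCommGroup E₂] [Module A E₂] [AddCommGroup K] [Module A K]
    [Module.Finite A X₂] [Module.Finite A X₁] [Module.Finite A E₂] [Module.Finite A K]
    (δ : X₂ →ₗ[A] X₁) (hδ : Function.Injective δ)
    (f₂ : X₂ →ₗ[A] E₂) (hf₂ : Function.Injective f₂) (hE₂ : Module.Injective A E₂)
    (η : (X₁ ⧸ LinearMap.range δ) →ₗ[A] K) (hη : Function.Injective η)
    (hK : Module.Injective A K)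
    (s : X₁ →ₗ[A] E₂) (hs : s ∘ₗ δ = f₂) :
    ∀ f₁ : X₁ →ₗ[A] E₂ × K,
      f₁ = LinearMap.prod s (η ∘ₗ (LinearMap.range δ).mkQ) →
      Function.Injective f₁ ∧
      f₁ ∘ₗ δ = LinearMap.inl A E₂ K ∘ₗ f₂ ∧
      ∃ g : (E₂ ⧸ LinearMap.range f₂) →ₗ[A] ((E₂ × K) ⧸ LinearMap.range f₁),
        g ∘ₗ (LinearMap.range f₂).mkQ =
          (LinearMap.range f₁).mkQ ∘ₗ LinearMap.inl A E₂ K ∧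
        Function.Injective g :=
  quiver_two_to_one_construction_general A X₂ X₁ E₂ K δ f₂ hf₂ η hη s hs
end

section
/- Let α : X₂ → X₁ and β : X₃ → X₁ be A-linear maps of finite-dimensional A-modules such that (α, β) : X₂ ⊕ X₃ → X₁ is injective, and let π : X₁ → C := coker(α, β) be the canonical projection. Let f₂ : X₂ → E₂ and f₃ : X₃ → E₃ be injective A-linear maps into injective A-modules, η : C → K an injective A-linear map into an injective A-module K, and s₂ : X₁ → E₂, s₃ : X₁ → E₃ A-linear maps satisfying s₂∘α = f₂, s₂∘β = 0, s₃∘α = 0, s₃∘β = f₃. Then f₁ := (s₂, s₃, η∘π) : X₁ → E₂ ⊕ E₃ ⊕ K is injective, and the induced map coker(f₂) ⊕ coker(f₃) → coker(f₁) on cokernels is injective. -/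
/-!
Write `u = (α, β)` and `π` for the projection onto `coker u`. As `η` is injective, the kernel
of `η ∘ π` is exactly the image of `u`, and `(s₂, s₃) ∘ u = f₂ ⊕ f₃` is injective. Hence the kernel
of `(s₂, s₃)` meets the image of `u` trivially, which is injectivity of `f₁`; and `(e₂, e₃, 0)`
lies in the image of `f₁` exactly when `(e₂, e₃)` lies in the image of `f₂ ⊕ f₃`, which is
injectivity of the induced map on cokernels.
-/

open LinearMap Submodule Function

section

variable {R M M₂ M₃ N P E₂ E₃ K : Type*} [Ring R]
  [AddCommGroup M] [Module R M] [AddCommGroup M₂] [Module R M₂] [AddCommGroup M₃] [Module R M₃]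
  [AddCommGroup N] [Module R N] [AddCommGroup P] [Module R P]
  [AddCommGroup E₂] [Module R E₂] [AddCommGroup E₃] [Module R E₃] [AddCommGroup K] [Module R K]

theorem LinearMap.disjoint_ker_range_of_injective_comp {s : M →ₗ[R] N} {u : P →ₗ[R] M}
    (h : Injective (s ∘ₗ u)) : Disjoint (ker s) (range u) := by
  rw [disjoint_iff_inf_le]
  rintro _ ⟨hs, y, rfl⟩
  rw [mem_bot, h (by simpa using hs : s (u y) = s (u 0)), map_zero]

theorem LinearMap.comap_prodMap_inl_range_prod_prod (s₂ : M →ₗ[R] E₂) (s₃ : M →ₗ[R] E₃)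
    (t : M →ₗ[R] K) :
    comap (prodMap id (inl R E₃ K)) (range (s₂.prod (s₃.prod t))) = map (s₂.prod s₃) (ker t) := by
  ext ⟨e₂, e₃⟩
  simp [Prod.ext_iff, and_comm, and_assoc]

theorem Submodule.exists_injective_comp_prodMap_mkQ {p₂ : Submodule R M₂} {p₃ : Submodule R M₃}
    {q : Submodule R N} (ι : M₂ × M₃ →ₗ[R] N) (h : comap ι q = p₂.prod p₃) :
    ∃ g : (M₂ ⧸ p₂) × (M₃ ⧸ p₃) →ₗ[R] N ⧸ q,
      g ∘ₗ p₂.mkQ.prodMap p₃.mkQ = q.mkQ ∘ₗ ι ∧ Injective g := by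
  have h₂ : p₂ ≤ comap (ι ∘ₗ inl R M₂ M₃) q := fun x hx =>
    show (x, 0) ∈ comap ι q from h ▸ ⟨hx, zero_mem p₃⟩
  have h₃ : p₃ ≤ comap (ι ∘ₗ inr R M₂ M₃) q := fun x hx =>
    show (0, x) ∈ comap ι q from h ▸ ⟨zero_mem p₂, hx⟩
  refine ⟨coprod (p₂.mapQ q _ h₂) (p₃.mapQ q _ h₃), ?_, ?_⟩
  · ext <;> simp
  · rw [← ker_eq_bot, eq_bot_iff]
    rintro ⟨u, v⟩ hg
    obtain ⟨x₂, rfl⟩ := p₂.mkQ_surjective u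
    obtain ⟨x₃, rfl⟩ := p₃.mkQ_surjective v
    have : (x₂, x₃) ∈ comap ι q := by
      simpa [← Quotient.mk_add, ← map_add, Quotient.mk_eq_zero] using hg
    rw [h] at this
    exact Prod.ext ((Quotient.mk_eq_zero p₂).2 this.1) ((Quotient.mk_eq_zero p₃).2 this.2)

theorem LinearMap.prod_comp_coprod_eq_prodMap {α : M₂ →ₗ[R] M} {β : M₃ →ₗ[R] M}
    {f₂ : M₂ →ₗ[R] E₂} {f₃ : M₃ →ₗ[R] E₃} {s₂ : M →ₗ[R] E₂} {s₃ : M →ₗ[R] E₃}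
    (hs₂α : s₂ ∘ₗ α = f₂) (hs₂β : s₂ ∘ₗ β = 0) (hs₃α : s₃ ∘ₗ α = 0) (hs₃β : s₃ ∘ₗ β = f₃) :
    s₂.prod s₃ ∘ₗ α.coprod β = f₂.prodMap f₃ := by
  rw [comp_coprod, prod_comp, prod_comp, hs₂α, hs₂β, hs₃α, hs₃β]
  ext <;> simp

end

theorem quiver_two_one_three_construction_general
    (A : Type) [Ring A]
    (X₂ X₃ X₁ E₂ E₃ K : Type)
    [AddCommGroup X₂] [Module A X₂] [AddCommGroup X₃] [Module A X₃]
    [AddCommGroup X₁] [Module A X₁] [AddCommGroup E₂] [Module A E₂]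
    [AddCommGroup E₃] [Module A E₃] [AddCommGroup K] [Module A K]
    (α : X₂ →ₗ[A] X₁) (β : X₃ →ₗ[A] X₁)
    (f₂ : X₂ →ₗ[A] E₂) (hf₂ : Function.Injective f₂)
    (f₃ : X₃ →ₗ[A] E₃) (hf₃ : Function.Injective f₃)
    (η : (X₁ ⧸ LinearMap.range (LinearMap.coprod α β)) →ₗ[A] K)
    (hη : Function.Injective η)
    (s₂ : X₁ →ₗ[A] E₂) (s₃ : X₁ →ₗ[A] E₃)
    (hs₂α : s₂ ∘ₗ α = f₂) (hs₂β : s₂ ∘ₗ β = 0)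
    (hs₃α : s₃ ∘ₗ α = 0) (hs₃β : s₃ ∘ₗ β = f₃) :
    ∀ f₁ : X₁ →ₗ[A] E₂ × E₃ × K,
      f₁ = LinearMap.prod s₂ (LinearMap.prod s₃
            (η ∘ₗ (LinearMap.range (LinearMap.coprod α β)).mkQ)) →
      Function.Injective f₁ ∧
      ∃ g : ((E₂ ⧸ LinearMap.range f₂) × (E₃ ⧸ LinearMap.range f₃)) →ₗ[A]
          ((E₂ × E₃ × K) ⧸ LinearMap.range f₁),
        g ∘ₗ LinearMap.prodMap (LinearMap.range f₂).mkQ (LinearMap.range f₃).mkQ =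
          (LinearMap.range f₁).mkQ ∘ₗ
            LinearMap.prodMap LinearMap.id (LinearMap.inl A E₃ K) ∧
        Function.Injective g := by
  rintro f₁ rfl
  have hs : s₂.prod s₃ ∘ₗ α.coprod β = f₂.prodMap f₃ :=
    prod_comp_coprod_eq_prodMap hs₂α hs₂β hs₃α hs₃β
  have ht : ker (η ∘ₗ (range (α.coprod β)).mkQ) = range (α.coprod β) := by
    rw [ker_comp_of_ker_eq_bot _ (ker_eq_bot.2 hη), ker_mkQ]
  refine ⟨?_, exists_injective_comp_prodMap_mkQ _ ?_⟩
  · rw [← ker_eq_bot, ker_prod, ker_prod, ht, ← inf_assoc, ← ker_prod]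
    exact (disjoint_ker_range_of_injective_comp (by rw [hs]; exact hf₂.prodMap hf₃)).eq_bot
  · rw [comap_prodMap_inl_range_prod_prod, ht, ← range_comp, hs, range_prodMap]

/-- Key construction for the quiver `2 → 1 ← 3`: given `(α, β) : X₂ ⊕ X₃ → X₁` injective,
embeddings `f₂, f₃, η` into injectives, and `s₂, s₃` with `s₂∘α = f₂`, `s₂∘β = 0`,
`s₃∘α = 0`, `s₃∘β = f₃`, the map `f₁ = (s₂, s₃, η∘π) : X₁ → E₂ ⊕ E₃ ⊕ K` is injective and
the induced map `coker f₂ ⊕ coker f₃ → coker f₁` is injective. -/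
theorem quiver_two_one_three_construction
    (k : Type) (A : Type) [Field k] [Ring A] [Algebra k A] [FiniteDimensional k A]
    (X₂ X₃ X₁ E₂ E₃ K : Type)
    [AddCommGroup X₂] [Module A X₂] [AddCommGroup X₃] [Module A X₃]
    [AddCommGroup X₁] [Module A X₁] [AddCommGroup E₂] [Module A E₂]
    [AddCommGroup E₃] [Module A E₃] [AddCommGroup K] [Module A K]
    [Module.Finite A X₂] [Module.Finite A X₃] [Module.Finite A X₁]
    [Module.Finite A E₂] [Module.Finite A E₃] [Module.Finite A K]
    (α : X₂ →ₗ[A] X₁) (β : X₃ →ₗ[A] X₁)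
    (hαβ : Function.Injective (LinearMap.coprod α β))
    (f₂ : X₂ →ₗ[A] E₂) (hf₂ : Function.Injective f₂) (hE₂ : Module.Injective A E₂)
    (f₃ : X₃ →ₗ[A] E₃) (hf₃ : Function.Injective f₃) (hE₃ : Module.Injective A E₃)
    (η : (X₁ ⧸ LinearMap.range (LinearMap.coprod α β)) →ₗ[A] K)
    (hη : Function.Injective η) (hK : Module.Injective A K)
    (s₂ : X₁ →ₗ[A] E₂) (s₃ : X₁ →ₗ[A] E₃)
    (hs₂α : s₂ ∘ₗ α = f₂) (hs₂β : s₂ ∘ₗ β = 0)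
    (hs₃α : s₃ ∘ₗ α = 0) (hs₃β : s₃ ∘ₗ β = f₃) :
    ∀ f₁ : X₁ →ₗ[A] E₂ × E₃ × K,
      f₁ = LinearMap.prod s₂ (LinearMap.prod s₃
            (η ∘ₗ (LinearMap.range (LinearMap.coprod α β)).mkQ)) →
      Function.Injective f₁ ∧
      ∃ g : ((E₂ ⧸ LinearMap.range f₂) × (E₃ ⧸ LinearMap.range f₃)) →ₗ[A]
          ((E₂ × E₃ × K) ⧸ LinearMap.range f₁),
        g ∘ₗ LinearMap.prodMap (LinearMap.range f₂).mkQ (LinearMap.range f₃).mkQ =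
          (LinearMap.range f₁).mkQ ∘ₗ
            LinearMap.prodMap LinearMap.id (LinearMap.inl A E₃ K) ∧
        Function.Injective g :=
  quiver_two_one_three_construction_general A X₂ X₃ X₁ E₂ E₃ K α β f₂ hf₂ f₃ hf₃ η hη s₂ s₃ hs₂α
    hs₂β hs₃α hs₃β
end

section
/- Mon(Q,A) is closed under extensions in Rep(Q,A): if 0 → X → Y → Z → 0 is an exact sequence in Rep(Q,A) (i.e. exact at every vertex) and X and Z are monic representations, then Y is a monic representation. -/
open CategoryTheory Limits

variable (A : Type) [Ring A]
variable (V : Type) [Quiver.{0} V] [Fintype V] [∀ i j : V, Fintype (i ⟶ j)]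
  [∀ i j : V, Fintype (Quiver.Path i j)]

/-- The category `Rep(Q,A)` of representations of the quiver `Q` over `A`. -/
abbrev QRep := Paths V ⥤ ModuleCat.{0} A

/-- The canonical map `δ_i(X) : ⊕_{α : e(α) = i} X_{s(α)} → X_i`. -/
noncomputable def deltaMap (X : QRep A V) (i : V) :
    (∀ a : (Σ j : V, j ⟶ i), X.obj ((Paths.of V).obj a.1)) →ₗ[A] X.obj ((Paths.of V).obj i) where
  toFun v := ∑ a : (Σ j : V, j ⟶ i), X.map a.2.toPath (v a)
  map_add' u v := by
    refine (Finset.sum_congr rfl fun a _ => ?_).trans Finset.sum_add_distrib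
    exact map_add _ (u a) (v a)
  map_smul' c v := by
    rw [RingHom.id_apply]
    refine (Finset.sum_congr rfl fun a _ => ?_).trans Finset.smul_sum.symm
    exact map_smul _ c (v a)

/-- A representation is monic if each `δ_i(X)` is injective. -/
def IsMonicRep (X : QRep A V) : Prop :=
  ∀ i : V, Function.Injective (deltaMap A V X i)

/-- A representation is finite-dimensional if each branch is a finite `A`-module. -/
def IsFinRep (X : QRep A V) : Prop :=
  ∀ i : V, Module.Finite A (X.obj ((Paths.of V).obj i))

/-- The monomorphism category `Mon(Q,A)`: finite-dimensional monic representations. -/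
abbrev MonRep := ObjectProperty.FullSubcategory (fun X : QRep A V => IsMonicRep A V X ∧ IsFinRep A V X)

/-- `m_i(M) = P(i) ⊗_k M`. -/
noncomputable def mObj (i : V) (M : ModuleCat.{0} A) : QRep A V where
  obj j := ModuleCat.of A (((Paths.of V).obj i ⟶ j) →₀ M)
  map {j l} q := ModuleCat.ofHom (Finsupp.lmapDomain M A (fun p => p ≫ q))
  map_id j := by
    have h : (fun p : (Paths.of V).obj i ⟶ j => p ≫ 𝟙 j) = id := by
      funext p; simp
    apply ModuleCat.hom_ext
    show Finsupp.lmapDomain (↑M) A (fun p : (Paths.of V).obj i ⟶ j => p ≫ 𝟙 j) = _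
    rw [h, Finsupp.lmapDomain_id]; rfl
  map_comp {j l r} q q' := by
    have h : (fun p : (Paths.of V).obj i ⟶ j => p ≫ (q ≫ q'))
        = (fun p' : (Paths.of V).obj i ⟶ l => p' ≫ q') ∘ (fun p => p ≫ q) := by
      funext p; simp
    apply ModuleCat.hom_ext
    show Finsupp.lmapDomain (↑M) A (fun p : (Paths.of V).obj i ⟶ j => p ≫ (q ≫ q')) = _
    rw [h, Finsupp.lmapDomain_comp]; rfl

/-- The functor `m_i : A-mod → Rep(Q,A)`, `M ↦ P(i) ⊗_k M`. -/
noncomputable def mFunctor (i : V) : ModuleCat.{0} A ⥤ QRep A V where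
  obj M := mObj A V i M
  map {M N} φ :=
    { app := fun j => ModuleCat.ofHom (Finsupp.mapRange.linearMap (α := ((Paths.of V).obj i ⟶ j)) φ.hom)
      naturality := fun j l q => by
        apply ModuleCat.hom_ext
        apply Finsupp.lhom_ext
        intro p m
        show Finsupp.mapRange.linearMap φ.hom (Finsupp.mapDomain (fun p' => p' ≫ q) (Finsupp.single p m))
          = Finsupp.mapDomain (fun p' => p' ≫ q) (Finsupp.mapRange.linearMap φ.hom (Finsupp.single p m))
        simp [Finsupp.mapDomain_single] }
  map_id M := by
    apply NatTrans.ext; funext j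
    apply ModuleCat.hom_ext
    apply Finsupp.lhom_ext; intro p m
    show Finsupp.mapRange.linearMap (ModuleCat.Hom.hom (𝟙 M)) (Finsupp.single p m) = Finsupp.single p m
    simp [Finsupp.mapRange_single] <;> rfl
  map_comp {M N P} φ ψ := by
    apply NatTrans.ext; funext j
    apply ModuleCat.hom_ext
    apply Finsupp.lhom_ext; intro p m
    show Finsupp.mapRange.linearMap (φ ≫ ψ).hom (Finsupp.single p m)
      = Finsupp.mapRange.linearMap ψ.hom (Finsupp.mapRange.linearMap φ.hom (Finsupp.single p m))
    simp [Finsupp.mapRange_single]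

/-- The canonical morphism `m_i(X_i) ⟶ X`, given at each vertex `j` by the maps `X_p`
over paths `p : i → j`. -/
noncomputable def counitHom (i : V) (X : QRep A V) :
    mObj A V i (X.obj ((Paths.of V).obj i)) ⟶ X where
  app j := ModuleCat.ofHom (Finsupp.lsum ℕ (fun p : (Paths.of V).obj i ⟶ j => (X.map p).hom))
  naturality j l q := by
    apply ModuleCat.hom_ext
    apply Finsupp.lhom_ext
    intro p m
    show Finsupp.lsum ℕ (fun p' : (Paths.of V).obj i ⟶ l => (X.map p').hom)
      (Finsupp.mapDomain (fun p' => p' ≫ q) (Finsupp.single p m)) = X.map q (Finsupp.lsum ℕ _ (Finsupp.single p m))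
    simp [Finsupp.mapDomain_single, Finsupp.lsum_single]

/-- The cokernel of `δ_i(X)`, i.e. `Cok_i(X)`. -/
noncomputable def cokerObj (X : QRep A V) (i : V) : ModuleCat.{0} A :=
  ModuleCat.of A (X.obj ((Paths.of V).obj i) ⧸ LinearMap.range (deltaMap A V X i))

instance : HasFiniteBiproducts (QRep A V) := HasFiniteBiproducts.of_hasFiniteProducts
instance : HasFiniteBiproducts (ModuleCat.{0} A) := HasFiniteBiproducts.of_hasFiniteProducts

/-!
Fix a vertex `i`. The maps `δ_i` form a morphism from the row
`⊕ X_{s(α)} → ⊕ Y_{s(α)} → ⊕ Z_{s(α)}`, exact because exactness is componentwise, to the row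
`0 → X_i → Y_i → Z_i`. As `δ_i(X)` and `δ_i(Z)` are injective, the four lemma makes `δ_i(Y)`
injective.
-/

theorem Function.Exact.piMap {ι : Type*} {M N P : ι → Type*} [∀ i, Zero (P i)]
    {f : ∀ i, M i → N i} {g : ∀ i, N i → P i} (h : ∀ i, Function.Exact (f i) (g i)) :
    Function.Exact (Pi.map f) (Pi.map g) := by
  intro y
  simp only [funext_iff, Pi.map_apply, Pi.zero_apply, h _ _, Set.mem_range]
  exact ⟨fun hy => ⟨fun i => (hy i).choose, fun i => (hy i).choose_spec⟩,
    fun ⟨x, hx⟩ i => ⟨x i, hx i⟩⟩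

theorem monic_closed_under_extensions
    (X Y Z : QRep A V)
    (f : X ⟶ Y) (g : Y ⟶ Z)
    (hmono : ∀ j : Paths V, Function.Injective (f.app j))
    (hexact : ∀ j : Paths V, Function.Exact (f.app j) (g.app j))
    (hX : IsMonicRep A V X) (hZ : IsMonicRep A V Z) :
    IsMonicRep A V Y := by
  intro i
  have app_deltaMap {W W' : QRep A V} (φ : W ⟶ W')
      (v : ∀ a : (Σ j : V, j ⟶ i), W.obj ((Paths.of V).obj a.1)) :
      φ.app _ (deltaMap A V W i v) = deltaMap A V W' i fun a => φ.app _ (v a) :=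
    (map_sum _ _ _).trans <| Finset.sum_congr rfl fun a _ =>
      NatTrans.naturality_apply φ a.2.toPath (v a)
  exact AddMonoidHom.injective_of_surjective_of_injective_of_injective
    (0 : Unit →+ _) (LinearMap.piMap fun a => (f.app ((Paths.of V).obj a.1)).hom).toAddMonoidHom
    (LinearMap.piMap fun a => (g.app ((Paths.of V).obj a.1)).hom).toAddMonoidHom
    (0 : Unit →+ _) (f.app _).hom.toAddMonoidHom (g.app _).hom.toAddMonoidHom
    0 (deltaMap A V X i).toAddMonoidHom (deltaMap A V Y i).toAddMonoidHom
    (deltaMap A V Z i).toAddMonoidHom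
    (by ext; simp) (by ext v; exact app_deltaMap f v) (by ext v; exact app_deltaMap g v)
    ((LinearMap.exact_zero_iff_injective Unit _).mpr (Pi.map_injective.mpr fun _ => hmono _))
    (Function.Exact.piMap fun _ => hexact _)
    ((LinearMap.exact_zero_iff_injective Unit _).mpr (hmono _))
    (fun _ => ⟨0, rfl⟩) (hX i) (hZ i)
end
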